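/- (Proposition A.5.) Let y ∈ Y, let y^δ ∈ Y with ‖y − y^δ‖_Y ≤ δ, let α > 0, and let x† ∈ D(F) satisfy F(x†) = y and x† = 0 a.e. on Ω∖S; assume x* = 0 a.e. on Ω∖S. Then every minimizer x of J_{α,S,y^δ} over D(F) satisfies ∫_{Ω∖S} |x(λ)|² dλ ≤ δ² + α∫_S |x†(λ) − x*(λ)|² dλ. -/
import Mathlib


open MeasureTheory Filter
open scoped RealInnerProductSpace ENNReal Topology

noncomputable section

/-- Weak sequential convergence in a real inner product space. -/
def WeakConv {H : Type*} [NormedAddCommGroup H] [InnerProductSpace ℝ H]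
    (u : ℕ → H) (x : H) : Prop :=
  ∀ z : H, Tendsto (fun k => ⟪u k, z⟫) atTop (𝓝 ⟪x, z⟫)

/-- The squared `L²` mass of (a representative of) `x : L²(Ω)` over the set `T`. -/
def sqInt {n : ℕ} (Ω : Set (Fin n → ℝ)) (T : Set (Fin n → ℝ))
    (x : Lp ℝ 2 (volume.restrict Ω)) : ℝ :=
  ∫ t in T, (x t) ^ 2 ∂(volume.restrict Ω)

/-- The Tikhonov-type functional
`J_{α,S,z}(x) = ‖F(x) − z‖² + α‖x − x*‖_{S⁺}² + ‖x − x*‖_{S⁻}²`. -/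
def J {n : ℕ} (Ω : Set (Fin n → ℝ)) {Y : Type*} [NormedAddCommGroup Y]
    [InnerProductSpace ℝ Y]
    (F : Lp ℝ 2 (volume.restrict Ω) → Y) (xstar : Lp ℝ 2 (volume.restrict Ω))
    (α : ℝ) (S : Set (Fin n → ℝ)) (z : Y) (x : Lp ℝ 2 (volume.restrict Ω)) : ℝ :=
  ‖F x - z‖ ^ 2 + (α * sqInt Ω S (x - xstar) + sqInt Ω (Ω \ S) (x - xstar))

/-- `x` is a minimizer of the functional `Jf` over the set `D`. -/
def IsMinimizer {X' : Type*} (Jf : X' → ℝ) (D : Set X') (x : X') : Prop :=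
  x ∈ D ∧ ∀ x' ∈ D, Jf x ≤ Jf x'

/-- `x = 0` almost everywhere on `Ω ∖ S`. -/
def ZeroOff {n : ℕ} (Ω S : Set (Fin n → ℝ))
    (x : Lp ℝ 2 (volume.restrict Ω)) : Prop :=
  ∀ᵐ t ∂((volume.restrict Ω).restrict (Ω \ S)), x t = 0

/-- `xdag` is an `x*`-`S`-minimum-norm solution of `F(x) = y`: it belongs to
`D(F)`, solves `F(xdag) = y`, vanishes a.e. on `Ω ∖ S`, and minimizes
`‖x − x*‖_{L²}` among all such solutions. -/
def IsMNS {n : ℕ} (Ω : Set (Fin n → ℝ)) {Y : Type*} [NormedAddCommGroup Y]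
    [InnerProductSpace ℝ Y]
    (D : Set (Lp ℝ 2 (volume.restrict Ω))) (F : Lp ℝ 2 (volume.restrict Ω) → Y)
    (xstar : Lp ℝ 2 (volume.restrict Ω)) (S : Set (Fin n → ℝ)) (y : Y)
    (xdag : Lp ℝ 2 (volume.restrict Ω)) : Prop :=
  xdag ∈ D ∧ F xdag = y ∧ ZeroOff Ω S xdag ∧
    ∀ x ∈ D, F x = y → ZeroOff Ω S x → ‖xdag - xstar‖ ≤ ‖x - xstar‖

lemma sqInt_nonneg {n : ℕ} (Ω T : Set (Fin n → ℝ)) (x : Lp ℝ 2 (volume.restrict Ω)) :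
    0 ≤ sqInt Ω T x :=
  integral_nonneg fun t => sq_nonneg _

/-- **Proposition A.5**: if `F(x†) = y`, `x† = 0` a.e. on `Ω ∖ S`, `x* = 0`
a.e. on `Ω ∖ S`, and `‖y − y^δ‖ ≤ δ`, then every minimizer `x` of
`J_{α,S,y^δ}` over `D(F)` satisfies
`∫_{Ω∖S} |x|² ≤ δ² + α ∫_S |x† − x*|²`. -/
theorem smallness_outside_support
    {n : ℕ} (Ω : Set (Fin n → ℝ)) (hΩmeas : MeasurableSet Ω)
    (hΩbdd : Bornology.IsBounded Ω)
    {Y : Type*} [NormedAddCommGroup Y] [InnerProductSpace ℝ Y] [CompleteSpace Y]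
    (D : Set (Lp ℝ 2 (volume.restrict Ω))) (hD : D.Nonempty)
    (F : Lp ℝ 2 (volume.restrict Ω) → Y)
    (hFcont : ContinuousOn F D)
    (hFweak : ∀ (u : ℕ → Lp ℝ 2 (volume.restrict Ω))
      (x : Lp ℝ 2 (volume.restrict Ω)) (z : Y),
      (∀ k, u k ∈ D) → WeakConv u x → WeakConv (fun k => F (u k)) z →
        x ∈ D ∧ F x = z)
    (xstar : Lp ℝ 2 (volume.restrict Ω))
    (S : Set (Fin n → ℝ)) (hSmeas : MeasurableSet S) (hSΩ : S ⊆ Ω)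
    (hxstar : ZeroOff Ω S xstar)
    (y : Y) (δ : ℝ) (yδ : Y) (hyδ : ‖y - yδ‖ ≤ δ)
    (α : ℝ) (hα : 0 < α)
    (xdag : Lp ℝ 2 (volume.restrict Ω)) (hxdagD : xdag ∈ D)
    (hxdagF : F xdag = y) (hxdag0 : ZeroOff Ω S xdag)
    (x : Lp ℝ 2 (volume.restrict Ω))
    (hx : IsMinimizer (J Ω F xstar α S yδ) D x) :
    sqInt Ω (Ω \ S) x ≤ δ ^ 2 + α * sqInt Ω S (xdag - xstar) := by
  have hsub : ∀ᵐ t ∂((volume.restrict Ω).restrict (Ω \ S)),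
      (x - xstar) t = x t - xstar t :=
    ae_restrict_of_ae (Lp.coeFn_sub x xstar)
  have hsub' : ∀ᵐ t ∂((volume.restrict Ω).restrict (Ω \ S)),
      (xdag - xstar) t = xdag t - xstar t :=
    ae_restrict_of_ae (Lp.coeFn_sub xdag xstar)
  have h1 : sqInt Ω (Ω \ S) (xdag - xstar) = 0 := by
    have : ∀ᵐ t ∂((volume.restrict Ω).restrict (Ω \ S)),
        ((xdag - xstar) t) ^ 2 = 0 := by
      filter_upwards [hsub', hxdag0, hxstar] with t h1 h2 h3
      rw [h1, h2, h3]; ring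
    exact integral_eq_zero_of_ae this
  have h2 : sqInt Ω (Ω \ S) x = sqInt Ω (Ω \ S) (x - xstar) := by
    refine integral_congr_ae ?_
    filter_upwards [hsub, hxstar] with t h1 h3
    rw [h1, h3]; ring
  have hJle := hx.2 xdag hxdagD
  have hnorm : ‖F xdag - yδ‖ ^ 2 ≤ δ ^ 2 := by
    rw [hxdagF]
    have h0 : (0:ℝ) ≤ ‖y - yδ‖ := norm_nonneg _
    nlinarith
  have hA : sqInt Ω (Ω \ S) (x - xstar) ≤ J Ω F xstar α S yδ x := by
    unfold J
    have := sq_nonneg ‖F x - yδ‖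
    have := sqInt_nonneg Ω S (x - xstar)
    nlinarith
  have hB : J Ω F xstar α S yδ xdag ≤ δ ^ 2 + α * sqInt Ω S (xdag - xstar) := by
    unfold J
    rw [h1]
    linarith
  rw [h2]
  exact le_trans hA (le_trans hJle hB)
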